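/- arXiv:0910.2691 — 5 statements merged into one kernel-verified Lean document; each statement's English description precedes it below -/
import Mathlib

section
/- Let L(z) = K(z-1)^6 (z-a)^3 (z-b) / z^5 where K = (11+5√5)/216, a = (-3+√5)/2, b = (7-3√5)/2, viewed as a Laurent polynomial over ℂ. Let Q_2 = -(9+4√5)z^2 + (20+8√5)z + z^{-2}. Then ∮_{S^1} L(z)^i Q_2'(z) dz = 0 for all integers i ≥ 0. -/
/-!
Each `L^n Q₂'` has a primitive on `ℂ \ {0}`, so its integral over the unit circle vanishes.
Induct on `n`, starting from `Q₂` itself. With the Laurent polynomial `R_k = T U_k / z^7`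
(`T = Lzeros`, `U_k = relCofactor k`, whose coefficients come from solving a linear system),
`(R_k L^k)' = (p₀(k) + p₁(k) L) L^k Q₂'` where `p₁ = relCoeff₁` has only negative roots, so a
primitive of `L^(n+1) Q₂'` is obtained from one of `L^n Q₂'`. Since `T L' / L = Lcrit / z`, this
relation is a polynomial identity of degree 14 in `z`.
-/

/-- `L(z) = K (z-1)^6 (z-a)^3 (z-b) / z^5` with `K = (11+5√5)/216`, `a = (-3+√5)/2`,
`b = (7-3√5)/2`, as an analytic function on `ℂ \ {0}`. -/
noncomputable def Lfun (z : ℂ) : ℂ :=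
  ((11 + 5 * (Real.sqrt 5 : ℂ)) / 216) * (z - 1) ^ 6 *
    (z - ((-3 + (Real.sqrt 5 : ℂ)) / 2)) ^ 3 * (z - ((7 - 3 * (Real.sqrt 5 : ℂ)) / 2)) / z ^ 5

/-- The Laurent polynomial `Q_2 = -(9+4√5)z² + (20+8√5)z + z⁻²`. -/
noncomputable def Q2fun (z : ℂ) : ℂ :=
  -(9 + 4 * (Real.sqrt 5 : ℂ)) * z ^ 2 + (20 + 8 * (Real.sqrt 5 : ℂ)) * z + (z ^ 2)⁻¹

open Polynomial

lemma sqrt5_sq : (√5 : ℂ) ^ 2 = 5 := by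
  rw [← Complex.ofReal_pow, Real.sq_sqrt (by norm_num)]
  norm_num

lemma sqrt5_pow_reduce : (√5 : ℂ) ^ 2 = 5 ∧ (√5 : ℂ) ^ 3 = 5 * √5 ∧ (√5 : ℂ) ^ 4 = 25 ∧
    (√5 : ℂ) ^ 5 = 25 * √5 ∧ (√5 : ℂ) ^ 6 = 125 ∧ (√5 : ℂ) ^ 7 = 125 * √5 := by
  refine ⟨sqrt5_sq, ?_, ?_, ?_, ?_, ?_⟩
  · linear_combination (√5 : ℂ) * sqrt5_sq
  · linear_combination ((√5 : ℂ) ^ 2 + 5) * sqrt5_sq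
  · linear_combination (√5 : ℂ) * ((√5 : ℂ) ^ 2 + 5) * sqrt5_sq
  · linear_combination ((√5 : ℂ) ^ 4 + 5 * (√5 : ℂ) ^ 2 + 25) * sqrt5_sq
  · linear_combination (√5 : ℂ) * ((√5 : ℂ) ^ 4 + 5 * (√5 : ℂ) ^ 2 + 25) * sqrt5_sq

lemma hasDerivAt_eval_div_pow {𝕜 : Type*} [NontriviallyNormedField 𝕜] (p : 𝕜[X]) (m : ℕ)
    {z : 𝕜} (hz : z ≠ 0) :
    HasDerivAt (fun w => p.eval w / w ^ m)
      ((z * p.derivative.eval z - m * p.eval z) / z ^ (m + 1)) z := by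
  refine ((p.hasDerivAt z).div (hasDerivAt_pow m z) (pow_ne_zero m hz)).congr_deriv ?_
  rcases m with _ | m
  · field_simp
    simp
  · field_simp
    push_cast
    ring

noncomputable def Lnum : ℂ[X] :=
  C ((11 + 5 * √5) / 216 : ℂ) * (X - 1) ^ 6 * (X - C ((-3 + √5) / 2 : ℂ)) ^ 3 *
    (X - C ((7 - 3 * √5) / 2 : ℂ))

noncomputable def Lzeros : ℂ[X] :=
  (X - 1) * (X - C ((-3 + √5) / 2 : ℂ)) * (X - C ((7 - 3 * √5) / 2 : ℂ))

noncomputable def Lcrit : ℂ[X] :=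
  C 5 * X ^ 3 + C (5 * √5 - 10 : ℂ) * X ^ 2 + C (5 * √5 - 10 : ℂ) * X + C (20 * √5 - 45 : ℂ)

noncomputable def Q2num : ℂ[X] := -C (9 + 4 * √5 : ℂ) * X ^ 4 + C (20 + 8 * √5 : ℂ) * X ^ 3 + 1

lemma Lfun_eq_eval_div : Lfun = fun z => Lnum.eval z / z ^ 5 := by
  ext z
  simp [Lfun, Lnum]

lemma Q2fun_eq_eval_div : Q2fun = fun z => Q2num.eval z / z ^ 2 := by
  ext z
  rcases eq_or_ne z 0 with rfl | hz
  · simp [Q2fun, Q2num]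
  · simp only [Q2fun, Q2num, eval_add, eval_mul, eval_neg, eval_C, eval_pow, eval_X, eval_one]
    field_simp

lemma Lzeros_mul_euler_Lnum (z : ℂ) :
    Lzeros.eval z * (z * Lnum.derivative.eval z - 5 * Lnum.eval z) = Lnum.eval z * Lcrit.eval z := by
  simp only [Lzeros, Lnum, Lcrit, derivative_mul, derivative_pow, derivative_sub, derivative_X,
    derivative_C, derivative_one, eval_add, eval_mul, eval_C, eval_pow, eval_X, eval_sub, eval_one,
    eval_zero, Nat.cast_ofNat, Nat.reduceSub]
  ring_nf
  simp only [sqrt5_pow_reduce]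
  ring_nf

noncomputable def relCofactor (k : ℂ) : ℂ[X] :=
  C ((-34128 - 15264 * √5) + (-271260 - 121320 * √5) * k + (-691350 - 309200 * √5) * k ^ 2 +
        (-706000 - 315750 * √5) * k ^ 3 + (-248750 - 111250 * √5) * k ^ 4) * X ^ 11 +
  C ((215016 + 96192 * √5) + (1708810 + 764400 * √5) * k +
        (4354050 + 1947600 * √5) * k ^ 2 + (4444500 + 1988000 * √5) * k ^ 3 +
        (1565000 + 700000 * √5) * k ^ 4) * X ^ 10 +
  C ((-540864 - 241872 * √5) + (-4297500 - 1921840 * √5) * k +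
        (-10946475 - 4895275 * √5) * k ^ 2 + (-11168625 - 4994625 * √5) * k ^ 3 +
        (-3930000 - 1757500 * √5) * k ^ 4) * X ^ 9 +
  C ((633042 + 282258 * √5) + (5034435 + 2246685 * √5) * k +
        (12847975 + 5736175 * √5) * k ^ 2 + (13138250 + 5867500 * √5) * k ^ 3 +
        (4631250 + 2068750 * √5) * k ^ 4) * X ^ 8 +
  C ((-176364 - 79500 * √5) + (-1470400 - 660790 * √5) * k +
        (-4007625 - 1797975 * √5) * k ^ 2 + (-4352875 - 1950875 * √5) * k ^ 3 +
        (-1607500 - 720000 * √5) * k ^ 4) * X ^ 7 +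
  C ((416574 + 182214 * √5) + (1815420 + 792070 * √5) * k +
        (2877725 + 1253075 * √5) * k ^ 2 + (1929125 + 838625 * √5) * k ^ 3 +
        (455000 + 197500 * √5) * k ^ 4) * X ^ 6 +
  C ((-559614 - 243846 * √5) + (-2849895 - 1242745 * √5) * k +
        (-5134850 - 2241200 * √5) * k ^ 2 + (-3849125 - 1681625 * √5) * k ^ 3 +
        (-1017500 - 445000 * √5) * k ^ 4) * X ^ 5 +
  C ((24804 + 9732 * √5) + (166625 + 67615 * √5) * k + (317250 + 129600 * √5) * k ^ 2 +
        (216625 + 87625 * √5) * k ^ 3 + (45000 + 17500 * √5) * k ^ 4) * X ^ 4 +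
  C ((14058 + 7722 * √5) + (106440 + 56190 * √5) * k + (239525 + 125825 * √5) * k ^ 2 +
        (202375 + 108125 * √5) * k ^ 3 + (56250 + 31250 * √5) * k ^ 4) * X ^ 3 +
  C ((8424 + 2040 * √5) + (63150 + 17890 * √5) * k + (156475 + 47475 * √5) * k ^ 2 +
        (157375 + 49375 * √5) * k ^ 3 + (55000 + 17500 * √5) * k ^ 4) * X ^ 2 +
  C ((-876 + 540 * √5) + (-4835 + 3375 * √5) * k + (-9675 + 7575 * √5) * k ^ 2 +
        (-8250 + 7250 * √5) * k ^ 3 + (-2500 + 2500 * √5) * k ^ 4) * X +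
  C ((-72 - 216 * √5) + (-990 - 1530 * √5) * k + (-3025 - 3675 * √5) * k ^ 2 +
        (-3375 - 3625 * √5) * k ^ 3 + (-1250 - 1250 * √5) * k ^ 4)

noncomputable def relCoeff₀ (k : ℂ) : ℂ :=
  -1875 * (k + 1) * (2 * k + 1) * (3 * k + 1) * (3 * k + 2) * (20 * k + 27 - √5)

noncomputable def relCoeff₁ (k : ℂ) : ℂ :=
  54 * (5 * k + 3) * (5 * k + 4) * (5 * k + 6) * (5 * k + 7) * (20 * k + 7 - √5)

set_option maxRecDepth 10000 in
lemma relation_identity (k z : ℂ) :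
    z * (Lzeros * relCofactor k).derivative.eval z - 7 * (Lzeros * relCofactor k).eval z
        + k * (relCofactor k).eval z * Lcrit.eval z
      = (relCoeff₀ k * z ^ 5 + relCoeff₁ k * Lnum.eval z)
        * (z * Q2num.derivative.eval z - 2 * Q2num.eval z) := by
  simp only [Lzeros, relCofactor, Lcrit, Lnum, Q2num, relCoeff₀, relCoeff₁, derivative_mul,
    derivative_add, derivative_C, derivative_sub, derivative_X, derivative_one, derivative_neg,
    derivative_pow, eval_add, eval_mul, eval_C, eval_pow, eval_X, eval_sub, eval_one, eval_zero,
    eval_neg, Nat.cast_ofNat, Nat.reduceSub]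
  ring_nf
  simp only [sqrt5_pow_reduce]
  ring_nf

lemma hasDerivAt_Lfun {z : ℂ} (hz : z ≠ 0) :
    HasDerivAt Lfun ((z * Lnum.derivative.eval z - 5 * Lnum.eval z) / z ^ 6) z := by
  rw [Lfun_eq_eval_div]
  exact hasDerivAt_eval_div_pow Lnum 5 hz

lemma hasDerivAt_Q2fun {z : ℂ} (hz : z ≠ 0) :
    HasDerivAt Q2fun ((z * Q2num.derivative.eval z - 2 * Q2num.eval z) / z ^ 3) z := by
  rw [Q2fun_eq_eval_div]
  exact hasDerivAt_eval_div_pow Q2num 2 hz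

noncomputable def relPrimitive (n : ℕ) (z : ℂ) : ℂ :=
  (Lzeros * relCofactor n).eval z / z ^ 7 * Lfun z ^ n

lemma hasDerivAt_relPrimitive (n : ℕ) {z : ℂ} (hz : z ≠ 0) :
    HasDerivAt (relPrimitive n)
      ((relCoeff₀ n + relCoeff₁ n * Lfun z) * Lfun z ^ n * deriv Q2fun z) z := by
  refine ((hasDerivAt_eval_div_pow _ 7 hz).mul ((hasDerivAt_Lfun hz).pow n)).congr_deriv ?_
  have key := relation_identity n z
  have hT := Lzeros_mul_euler_Lnum z
  have hP : Lnum.eval z = Lfun z * z ^ 5 := by rw [Lfun_eq_eval_div]; field_simp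
  rw [(hasDerivAt_Q2fun hz).deriv, Pi.pow_apply]
  rw [hP] at key hT ⊢
  rw [eval_mul] at key ⊢
  generalize Lfun z = L at key hT ⊢
  rcases n with _ | m
  · field_simp
    linear_combination z ^ 12 * key
  · simp only [Nat.add_sub_cancel]
    field_simp
    push_cast at key ⊢
    linear_combination
      z ^ 12 * L ^ (m + 1) * key + (m + 1) * z ^ 7 * L ^ m * (relCofactor (m + 1)).eval z * hT

lemma relCoeff₁_natCast_ne_zero (n : ℕ) : relCoeff₁ n ≠ 0 := by
  have h : relCoeff₁ n = ((54 * (5 * n + 3) * (5 * n + 4) * (5 * n + 6) * (5 * n + 7) *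
      (20 * n + 7 - √5) : ℝ) : ℂ) := by
    simp [relCoeff₁]
  have hsqrt : √5 < 7 := by rw [Real.sqrt_lt' (by norm_num)]; norm_num
  rw [h, Complex.ofReal_ne_zero]
  exact (mul_pos (by positivity) (by linarith)).ne'

theorem exists_hasDerivAt_Lfun_pow_mul_deriv_Q2fun (n : ℕ) :
    ∃ F : ℂ → ℂ, ∀ z ≠ 0, HasDerivAt F (Lfun z ^ n * deriv Q2fun z) z := by
  induction n with
  | zero =>
    refine ⟨Q2fun, fun z hz => ?_⟩
    simpa using (hasDerivAt_Q2fun hz).differentiableAt.hasDerivAt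
  | succ n ih =>
    obtain ⟨F, hF⟩ := ih
    refine ⟨fun z => (relPrimitive n z - relCoeff₀ n * F z) / relCoeff₁ n, fun z hz => ?_⟩
    refine (((hasDerivAt_relPrimitive n hz).sub ((hF z hz).const_mul _)).div_const _).congr_deriv
      ?_
    field_simp [relCoeff₁_natCast_ne_zero n]
    ring

/-- `∮_{S¹} L(z)^i Q_2'(z) dz = 0` for all integers `i ≥ 0`. -/
theorem stmt2 (i : ℕ) : (∮ z in C(0, 1), (Lfun z) ^ i * deriv Q2fun z) = 0 := by
  obtain ⟨F, hF⟩ := exists_hasDerivAt_Lfun_pow_mul_deriv_Q2fun i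
  exact circleIntegral.integral_eq_zero_of_hasDerivWithinAt zero_le_one fun z hz =>
    (hF z (ne_zero_of_mem_unit_sphere ⟨z, hz⟩)).hasDerivWithinAt
end

section
/- Let L(z) = K(z-1)^6 (z-a)^3 (z-b) / z^5 where K = (11+5√5)/216, a = (-3+√5)/2, b = (7-3√5)/2, viewed as a Laurent polynomial over ℂ. Let Q_3 = (47/2 + (21/2)√5)z^3 - (195/2 + (87/2)√5)z^2 + (255/2 + (111/2)√5)z + z^{-3}. Then ∮_{S^1} L(z)^i Q_3'(z) dz = 0 for all integers i ≥ 0. -/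
/-- `Q_3 = (47/2 + (21/2)√5)z³ - (195/2 + (87/2)√5)z² + (255/2 + (111/2)√5)z + z⁻³`. -/
noncomputable def Q3fun (z : ℂ) : ℂ :=
  (47 / 2 + 21 / 2 * (Real.sqrt 5 : ℂ)) * z ^ 3 -
    (195 / 2 + 87 / 2 * (Real.sqrt 5 : ℂ)) * z ^ 2 +
    (255 / 2 + 111 / 2 * (Real.sqrt 5 : ℂ)) * z + (z ^ 3)⁻¹

open Polynomial Matrix

section
-- Any norm would do here: `HasDerivAt` only sees the topology, which is the product one.
attribute [local instance] Matrix.linftyOpNormedRing Matrix.linftyOpNormedAlgebra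

variable {𝕜 n : Type*} [NontriviallyNormedField 𝕜] [CompleteSpace 𝕜] [Fintype n] [DecidableEq n]
  {M : 𝕜 → Matrix n n 𝕜} {M' : Matrix n n 𝕜} {z : 𝕜}

theorem Matrix.hasDerivAt_trace_pow (hM : HasDerivAt M M' z) (k : ℕ) :
    HasDerivAt (fun w => trace (M w ^ k)) (k * trace (M z ^ (k - 1) * M')) z := by
  have hcyc : ∀ i ∈ Finset.range k,
      trace (M z ^ (k - 1 - i) * M' * M z ^ i) = trace (M z ^ (k - 1) * M') := by
    intro i hi
    rw [trace_mul_comm, ← Matrix.mul_assoc, ← pow_add,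
      Nat.add_sub_cancel' (Nat.le_sub_one_of_lt (Finset.mem_range.mp hi))]
  refine ((traceLinearMap n 𝕜 𝕜).toContinuousLinearMap.hasFDerivAt.comp_hasDerivAt z
    (hM.fun_pow' k)).congr_deriv ?_
  change trace (∑ i ∈ Finset.range k, M z ^ (k - 1 - i) * M' * M z ^ i) = _
  rw [trace_sum, Finset.sum_congr rfl hcyc]
  simp

theorem Matrix.hasDerivAt_trace_aeval (hM : HasDerivAt M M' z) (F : 𝕜[X]) :
    HasDerivAt (fun w => trace (aeval (M w) F)) (trace (aeval (M z) (derivative F) * M')) z := by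
  induction F using Polynomial.induction_on' with
  | add F G hF hG => simpa [add_mul] using hF.fun_add hG
  | monomial k c =>
    simp only [aeval_monomial, derivative_monomial, ← Algebra.smul_def, smul_mul_assoc,
      trace_smul, smul_eq_mul]
    refine ((hasDerivAt_trace_pow hM k).const_mul c).congr_deriv ?_
    ring
end

theorem Polynomial.exists_derivative_eq {K : Type*} [Field K] [CharZero K] (q : K[X]) :
    ∃ P : K[X], derivative P = q := by
  induction q using Polynomial.induction_on' with
  | add q r hq hr =>
    obtain ⟨P, rfl⟩ := hq
    obtain ⟨R, rfl⟩ := hr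
    exact ⟨P + R, derivative_add⟩
  | monomial k c =>
    refine ⟨monomial (k + 1) (c / (k + 1)), ?_⟩
    rw [derivative_monomial, add_tsub_cancel_right, Nat.cast_add_one,
      div_mul_cancel₀ _ (Nat.cast_add_one_ne_zero k)]

namespace LaurentMoment
noncomputable section

def e₁ (z : ℂ) : ℂ := z + z⁻¹

def e₂ (z : ℂ) : ℂ :=
  (3/2 + √5/2) * z ^ 2 - (5/2 + √5) * z - 13/4 + (-5/2 + √5) * z⁻¹ + (3/2 - √5/2) * z⁻¹ ^ 2

def M (z : ℂ) : Matrix (Fin 2) (Fin 2) ℂ := !![0, -e₂ z; 1, e₁ z]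

def A : ℂ[X] :=
  C (1/108) * X ^ 5 - C (5/216) * X ^ 4 - C (25/216) * X ^ 3 + C (5/48) * X ^ 2 + C (35/64) * X
    + C (49/128)

def B : ℂ[X] :=
  C (-7/2 - 3/2 * (√5 : ℂ)) * X ^ 3 + C (45/4 + 21/4 * (√5 : ℂ)) * X ^ 2
    + C (291/8 + 111/8 * (√5 : ℂ)) * X

lemma sqrt5_sq : (√5 : ℂ) ^ 2 = 5 := by
  rw [← Complex.ofReal_pow, Real.sq_sqrt (by norm_num)]; norm_num

lemma charpoly_M (z : ℂ) : (M z).charpoly = X ^ 2 - C (e₁ z) * X + C (e₂ z) := by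
  simp [charpoly_fin_two, M, trace_fin_two, det_fin_two]

lemma exists_A_eq_charpoly_mul_add {z : ℂ} (hz : z ≠ 0) :
    ∃ q : ℂ[X], A = (M z).charpoly * q + C (Lfun z) := by
  have h5 := sqrt5_sq
  set s := e₁ z with hs
  set p := e₂ z with hp
  -- Long division of `A` by `X² - sX + p`: the remainder is `0 • X + L(z)` (`hrem₁`, `hrem₀`)
  -- and the quotient is `X³/108 + q₂X² + q₁X + q₀`.
  have hrem₁ : 35/64 + (25/216)*p + (1/108)*p^2 + (5/48)*s + (5/108)*s*p - (25/216)*s^2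
      - (1/36)*s^2*p - (5/216)*s^3 + (1/108)*s^4 = 0 := by
    simp only [hs, hp, e₁, e₂]
    field_simp
    grind
  have hrem₀ : 49/128 - (5/48)*p - (5/216)*p^2 + (25/216)*s*p + (1/54)*s*p^2 + (5/216)*s^2*p
      - (1/108)*s^3*p = Lfun z := by
    simp only [hs, hp, e₁, e₂, Lfun]
    field_simp
    grind
  set q₂ := s/108 - 5/216
  set q₁ := s * q₂ - p/108 - 25/216
  set q₀ := s * q₁ - p * q₂ + 5/48
  refine ⟨C (1/108) * X ^ 3 + C q₂ * X ^ 2 + C q₁ * X + C q₀, Polynomial.funext fun t => ?_⟩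
  simp only [charpoly_M, A, eval_add, eval_sub, eval_mul, eval_C, eval_X, eval_pow]
  linear_combination t * hrem₁ + hrem₀

lemma aeval_M_A {z : ℂ} (hz : z ≠ 0) : aeval (M z) A = Lfun z • 1 := by
  obtain ⟨q, hq⟩ := exists_A_eq_charpoly_mul_add hz
  simp [hq, aeval_self_charpoly, Algebra.algebraMap_eq_smul_one]

lemma trace_aeval_M_B {z : ℂ} (hz : z ≠ 0) :
    trace (aeval (M z) B) = Q3fun z + (345/8 + 177/8 * √5) := by
  have h5 := sqrt5_sq
  have ht₁ : trace (M z) = e₁ z := by simp [M, trace_fin_two]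
  have ht₂ : trace (M z ^ 2) = e₁ z ^ 2 - 2 * e₂ z := by
    simp [M, sq, trace_fin_two]; ring
  have ht₃ : trace (M z ^ 3) = e₁ z ^ 3 - 3 * e₁ z * e₂ z := by
    simp [M, pow_succ, trace_fin_two]; ring
  simp only [B, map_add, map_mul, aeval_C, aeval_X, map_pow, Algebra.algebraMap_eq_smul_one,
    smul_mul_assoc, one_mul, trace_add, trace_smul, smul_eq_mul, ht₁, ht₂, ht₃, e₁, e₂, Q3fun,
    add_mul, sub_mul]
  field_simp
  grind

lemma differentiableAt_e₁ {z : ℂ} (hz : z ≠ 0) : DifferentiableAt ℂ e₁ z := by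
  unfold e₁; fun_prop (disch := assumption)

lemma differentiableAt_e₂ {z : ℂ} (hz : z ≠ 0) : DifferentiableAt ℂ e₂ z := by
  unfold e₂; fun_prop (disch := assumption)

section
attribute [local instance] Matrix.linftyOpNormedRing Matrix.linftyOpNormedAlgebra

lemma hasDerivAt_M {z : ℂ} (hz : z ≠ 0) : HasDerivAt M (deriv M z) z := by
  have hM : M = fun w => e₁ w • !![0, 0; 0, 1] - e₂ w • !![0, 1; 0, 0] + !![0, 0; 1, 0] := by
    ext w i j; fin_cases i <;> fin_cases j <;> simp [M]
  rw [hM]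
  exact (((differentiableAt_e₁ hz).smul_const _).sub ((differentiableAt_e₂ hz).smul_const _)
    |>.add_const _).hasDerivAt

lemma hasDerivAt_Q3fun {z : ℂ} (hz : z ≠ 0) :
    HasDerivAt Q3fun (trace (aeval (M z) (derivative B) * deriv M z)) z := by
  refine ((hasDerivAt_trace_aeval (hasDerivAt_M hz) B).sub_const (345/8 + 177/8 * √5 : ℂ))
    |>.congr_of_eventuallyEq ?_
  filter_upwards [eventually_ne_nhds hz] with w hw
  rw [trace_aeval_M_B hw, add_sub_cancel_right]

lemma exists_primitive (i : ℕ) :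
    ∃ F : ℂ → ℂ, ∀ z ≠ 0, HasDerivAt F (Lfun z ^ i * deriv Q3fun z) z := by
  obtain ⟨P, hP⟩ := exists_derivative_eq (A ^ i * derivative B)
  refine ⟨fun w => trace (aeval (M w) P), fun z hz => ?_⟩
  refine (hasDerivAt_trace_aeval (hasDerivAt_M hz) P).congr_deriv ?_
  rw [hP, map_mul, map_pow, aeval_M_A hz, (hasDerivAt_Q3fun hz).deriv, _root_.smul_pow, one_pow,
    smul_mul_assoc, one_mul, smul_mul_assoc, trace_smul, smul_eq_mul]

end

end
end LaurentMoment

/-- `∮_{S¹} L(z)^i Q_3'(z) dz = 0` for all integers `i ≥ 0`. -/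
theorem stmt3 (i : ℕ) : (∮ z in C(0, 1), (Lfun z) ^ i * deriv Q3fun z) = 0 := by
  obtain ⟨F, hF⟩ := LaurentMoment.exists_primitive i
  refine circleIntegral.integral_eq_zero_of_hasDerivWithinAt zero_le_one
    fun z hz => (hF z ?_).hasDerivWithinAt
  rintro rfl
  simp at hz
end

section
/- Let L and Q be Laurent polynomials over ℂ such that ∮_{S^1} L(z)^i Q'(z) dz = 0 for all integers i ≥ 0. Then for every polynomial R ∈ ℂ[z], the Laurent polynomial Q̂ = (R ∘ L) · Q (the product of R evaluated at L with Q) also satisfies ∮_{S^1} L(z)^i Q̂'(z) dz = 0 for all integers i ≥ 0. -/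
/-!
Write `A'` for the derivative of `z ↦ lpEval A z`. The Laurent polynomials `A` with
`∮ L^i A' = 0` for all `i` form a `ℂ`-subspace, so it suffices to show that it is stable under
multiplication by `L`. This follows from the identity
`(i + 1) L^i (L A)' = (L^(i+1) A)' + i L^(i+1) A'`,
whose first term on the right is an exact derivative and so integrates to zero over a closed
curve avoiding `0`. Induction on `R` then handles `(R ∘ L) · Q`.
-/

/-- Evaluation of a Laurent polynomial at a complex number (using `zpow`;
on `ℂ \ {0}` this is the usual analytic function `z ↦ Σ c_k z^k`). -/
noncomputable def lpEval (p : LaurentPolynomial ℂ) (z : ℂ) : ℂ :=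
  Finsupp.sum (AddMonoidAlgebra.coeff p) fun k c => c * z ^ k

open Metric Filter Topology

section Eval

variable {z : ℂ}

noncomputable def lpEvalAlgHom (hz : z ≠ 0) : LaurentPolynomial ℂ →ₐ[ℂ] ℂ :=
  AddMonoidAlgebra.lift ℂ ℂ ℤ
    { toFun := fun k => z ^ k.toAdd
      map_one' := zpow_zero z
      map_mul' := fun a b => zpow_add₀ hz a.toAdd b.toAdd }

theorem lpEvalAlgHom_apply (hz : z ≠ 0) (p : LaurentPolynomial ℂ) :
    lpEvalAlgHom hz p = lpEval p z := by
  rw [lpEvalAlgHom, AddMonoidAlgebra.lift_apply]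
  rfl

theorem lpEval_add (p q : LaurentPolynomial ℂ) : lpEval (p + q) = lpEval p + lpEval q := by
  ext z
  exact Finsupp.sum_add_index' (fun _ => zero_mul _) fun _ _ _ => add_mul _ _ _

theorem lpEval_smul (a : ℂ) (p : LaurentPolynomial ℂ) : lpEval (a • p) = a • lpEval p := by
  ext z
  simp only [lpEval, AddMonoidAlgebra.coeff_smul, Pi.smul_apply, smul_eq_mul, Finsupp.mul_sum]
  rw [Finsupp.sum_smul_index fun _ => zero_mul _]
  simp only [mul_assoc]

theorem lpEval_mul (hz : z ≠ 0) (p q : LaurentPolynomial ℂ) :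
    lpEval (p * q) z = lpEval p z * lpEval q z := by
  simp only [← lpEvalAlgHom_apply hz, map_mul]

theorem lpEval_pow (hz : z ≠ 0) (p : LaurentPolynomial ℂ) (n : ℕ) :
    lpEval (p ^ n) z = lpEval p z ^ n := by
  simp only [← lpEvalAlgHom_apply hz, map_pow]

theorem differentiableOn_lpEval (p : LaurentPolynomial ℂ) :
    DifferentiableOn ℂ (lpEval p) {0}ᶜ := by
  show DifferentiableOn ℂ (fun w => ∑ k ∈ p.coeff.support, p.coeff k * w ^ k) {0}ᶜ
  intro w hw
  have hw : w ≠ 0 := hw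
  fun_prop (disch := exact Or.inl hw)

theorem hasDerivAt_lpEval (p : LaurentPolynomial ℂ) (hz : z ≠ 0) :
    HasDerivAt (lpEval p) (deriv (lpEval p) z) z :=
  ((differentiableOn_lpEval p).differentiableAt (isOpen_compl_singleton.mem_nhds hz)).hasDerivAt

end Eval

section Deriv

variable {z : ℂ}

theorem continuousOn_deriv_lpEval (p : LaurentPolynomial ℂ) :
    ContinuousOn (deriv (lpEval p)) {0}ᶜ :=
  ((differentiableOn_lpEval p).deriv isOpen_compl_singleton).continuousOn

theorem deriv_lpEval_add (hz : z ≠ 0) (p q : LaurentPolynomial ℂ) :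
    deriv (lpEval (p + q)) z = deriv (lpEval p) z + deriv (lpEval q) z := by
  rw [lpEval_add]
  exact ((hasDerivAt_lpEval p hz).add (hasDerivAt_lpEval q hz)).deriv

theorem deriv_lpEval_smul (hz : z ≠ 0) (a : ℂ) (p : LaurentPolynomial ℂ) :
    deriv (lpEval (a • p)) z = a * deriv (lpEval p) z := by
  rw [lpEval_smul]
  exact ((hasDerivAt_lpEval p hz).const_smul a).deriv

theorem add_one_mul_pow_mul_deriv_lpEval_mul (hz : z ≠ 0) (L A : LaurentPolynomial ℂ) (i : ℕ) :
    ((i : ℂ) + 1) * (lpEval L z ^ i * deriv (lpEval (L * A)) z) =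
      deriv (lpEval (L ^ (i + 1) * A)) z + i * (lpEval L z ^ (i + 1) * deriv (lpEval A) z) := by
  have hnear : ∀ᶠ w in 𝓝 z, w ≠ 0 := eventually_ne_nhds hz
  have hL := hasDerivAt_lpEval L hz
  have hA := hasDerivAt_lpEval A hz
  have hLA : deriv (lpEval (L * A)) z =
      deriv (lpEval L) z * lpEval A z + lpEval L z * deriv (lpEval A) z :=
    ((hL.mul hA).congr_of_eventuallyEq (hnear.mono fun w hw => lpEval_mul hw L A)).deriv
  have hLiA : deriv (lpEval (L ^ (i + 1) * A)) z =
      ((i + 1 : ℕ) * lpEval L z ^ i * deriv (lpEval L) z) * lpEval A z +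
        lpEval L z ^ (i + 1) * deriv (lpEval A) z := by
    have h := ((hL.fun_pow (i + 1)).fun_mul hA).congr_of_eventuallyEq
      (f₁ := lpEval (L ^ (i + 1) * A)) (hnear.mono fun w hw => by rw [lpEval_mul hw, lpEval_pow hw])
    rw [Nat.add_sub_cancel] at h
    exact h.deriv
  rw [hLA, hLiA]
  push_cast
  ring

end Deriv

section CircleIntegral

variable {c : ℂ} {R : ℝ}

theorem circleIntegral_deriv_lpEval (hR : 0 ≤ R) (h0 : (0 : ℂ) ∉ sphere c R)
    (p : LaurentPolynomial ℂ) : (∮ z in C(c, R), deriv (lpEval p) z) = 0 :=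
  circleIntegral.integral_eq_zero_of_hasDerivWithinAt hR fun _ hz =>
    (hasDerivAt_lpEval p (ne_of_mem_of_not_mem hz h0)).hasDerivWithinAt

theorem circleIntegrable_lpEval_pow_mul_deriv (hR : 0 ≤ R) (h0 : (0 : ℂ) ∉ sphere c R)
    (L A : LaurentPolynomial ℂ) (i : ℕ) :
    CircleIntegrable (fun z => lpEval L z ^ i * deriv (lpEval A) z) c R := by
  have hsphere : sphere c R ⊆ {0}ᶜ := fun _ hz => ne_of_mem_of_not_mem hz h0
  refine ContinuousOn.circleIntegrable hR (ContinuousOn.mono ?_ hsphere)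
  exact ((differentiableOn_lpEval L).continuousOn.pow i).mul (continuousOn_deriv_lpEval A)

def MomentsVanish (L : LaurentPolynomial ℂ) (c : ℂ) (R : ℝ) (A : LaurentPolynomial ℂ) : Prop :=
  ∀ i : ℕ, (∮ z in C(c, R), lpEval L z ^ i * deriv (lpEval A) z) = 0

namespace MomentsVanish

variable {L A B : LaurentPolynomial ℂ}

theorem add (hR : 0 ≤ R) (h0 : (0 : ℂ) ∉ sphere c R) (hA : MomentsVanish L c R A)
    (hB : MomentsVanish L c R B) : MomentsVanish L c R (A + B) := by
  intro i
  calc (∮ z in C(c, R), lpEval L z ^ i * deriv (lpEval (A + B)) z)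
      = ∮ z in C(c, R), (lpEval L z ^ i * deriv (lpEval A) z +
          lpEval L z ^ i * deriv (lpEval B) z) :=
        circleIntegral.integral_congr hR fun z hz => by
          rw [deriv_lpEval_add (ne_of_mem_of_not_mem hz h0), mul_add]
    _ = 0 := by
      rw [circleIntegral.integral_add (circleIntegrable_lpEval_pow_mul_deriv hR h0 L A i)
        (circleIntegrable_lpEval_pow_mul_deriv hR h0 L B i), hA i, hB i, add_zero]

theorem smul (hR : 0 ≤ R) (h0 : (0 : ℂ) ∉ sphere c R) (a : ℂ) (hA : MomentsVanish L c R A) :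
    MomentsVanish L c R (a • A) := by
  intro i
  calc (∮ z in C(c, R), lpEval L z ^ i * deriv (lpEval (a • A)) z)
      = ∮ z in C(c, R), a * (lpEval L z ^ i * deriv (lpEval A) z) :=
        circleIntegral.integral_congr hR fun z hz => by
          rw [deriv_lpEval_smul (ne_of_mem_of_not_mem hz h0), mul_left_comm]
    _ = 0 := by rw [circleIntegral.integral_const_mul, hA i, mul_zero]

theorem mul_left (hR : 0 ≤ R) (h0 : (0 : ℂ) ∉ sphere c R) (hA : MomentsVanish L c R A) :
    MomentsVanish L c R (L * A) := by
  intro i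
  have hdiff : CircleIntegrable (deriv (lpEval (L ^ (i + 1) * A))) c R :=
    ContinuousOn.circleIntegrable hR
      ((continuousOn_deriv_lpEval _).mono fun _ hz => ne_of_mem_of_not_mem hz h0)
  have hscaled : ((i : ℂ) + 1) * (∮ z in C(c, R), lpEval L z ^ i * deriv (lpEval (L * A)) z) = 0 :=
    calc ((i : ℂ) + 1) * (∮ z in C(c, R), lpEval L z ^ i * deriv (lpEval (L * A)) z)
        = ∮ z in C(c, R), ((i : ℂ) + 1) * (lpEval L z ^ i * deriv (lpEval (L * A)) z) :=
          (circleIntegral.integral_const_mul _ _ _ _).symm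
      _ = ∮ z in C(c, R), (deriv (lpEval (L ^ (i + 1) * A)) z +
            i * (lpEval L z ^ (i + 1) * deriv (lpEval A) z)) :=
          circleIntegral.integral_congr hR fun z hz =>
            add_one_mul_pow_mul_deriv_lpEval_mul (ne_of_mem_of_not_mem hz h0) L A i
      _ = 0 := by
        rw [circleIntegral.integral_add hdiff
            (g := fun z => (i : ℂ) * (lpEval L z ^ (i + 1) * deriv (lpEval A) z))
            ((circleIntegrable_lpEval_pow_mul_deriv hR h0 L A (i + 1)).const_smul),
          circleIntegral_deriv_lpEval hR h0, circleIntegral.integral_const_mul, hA (i + 1),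
          mul_zero, add_zero]
  exact (mul_eq_zero.1 hscaled).resolve_left (Nat.cast_add_one_ne_zero i)

theorem aeval_mul (hR : 0 ≤ R) (h0 : (0 : ℂ) ∉ sphere c R) (hA : MomentsVanish L c R A)
    (P : Polynomial ℂ) : MomentsVanish L c R (Polynomial.aeval L P * A) := by
  induction P using Polynomial.induction_on with
  | C a =>
    rw [Polynomial.aeval_C, ← Algebra.smul_def]
    exact hA.smul hR h0 a
  | add P P' hP hP' =>
    rw [map_add, add_mul]
    exact hP.add hR h0 hP'
  | monomial n a hP =>
    rw [pow_succ', ← mul_assoc, mul_comm _ Polynomial.X, mul_assoc, map_mul, Polynomial.aeval_X,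
      mul_assoc]
    exact hP.mul_left hR h0

end MomentsVanish

end CircleIntegral

/-- If a Laurent polynomial `Q` satisfies `∮_{S¹} L(z)^i Q'(z) dz = 0` for all `i ≥ 0`,
then for any polynomial `R ∈ ℂ[z]` the Laurent polynomial `Q̂ = (R ∘ L) · Q` satisfies
`∮_{S¹} L(z)^i Q̂'(z) dz = 0` for all `i ≥ 0` as well. -/
theorem stmt5 (L Q : LaurentPolynomial ℂ)
    (hQ : ∀ i : ℕ, (∮ z in C(0, 1), (lpEval L z) ^ i * deriv (lpEval Q) z) = 0)
    (R : Polynomial ℂ) :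
    ∀ i : ℕ,
      (∮ z in C(0, 1),
        (lpEval L z) ^ i * deriv (lpEval (Polynomial.aeval L R * Q)) z) = 0 :=
  MomentsVanish.aeval_mul zero_le_one (by simp) hQ R
end

section
/- In the symmetric group on the 10 symbols {1,...,10}, consider the permutations φ = (1 2 3 4 5)(6 7 8 9 10), α = (1 5)(2 8)(4 7), and σ = (2 5 7 6 10 9)(3 8 4). Then σ · α · φ = 1 (the identity permutation), and the subgroup of S_{10} generated by σ and α is isomorphic as a group to the symmetric group S_5 (in particular it has order 120). -/
/-- The permutation `φ = (1 2 3 4 5)(6 7 8 9 10)` of `{1,…,10}`, written on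
`Fin 10` (symbol `i` corresponds to index `i-1`). -/
def permPhi : Equiv.Perm (Fin 10) :=
  List.formPerm [(0 : Fin 10), 1, 2, 3, 4] * List.formPerm [(5 : Fin 10), 6, 7, 8, 9]

/-- The permutation `α = (1 5)(2 8)(4 7)` of `{1,…,10}`, written on `Fin 10`. -/
def permAlpha : Equiv.Perm (Fin 10) :=
  Equiv.swap 0 4 * Equiv.swap 1 7 * Equiv.swap 3 6

/-- The permutation `σ = (2 5 7 6 10 9)(3 8 4)` of `{1,…,10}`, written on `Fin 10`. -/
def permSigma : Equiv.Perm (Fin 10) :=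
  List.formPerm [(1 : Fin 10), 4, 6, 5, 9, 8] * List.formPerm [(2 : Fin 10), 7, 3]

/-!
Number the 2-element subsets of `{1,…,5}` as the ten symbols. Then `σ` and `α` are the
permutations induced by `(1 2)(3 5 4)` and `(1 5)` in `S₅`. The action of `S₅` on 2-subsets is
faithful, so `⟨σ, α⟩` is isomorphic to the subgroup of `S₅` generated by these two elements, and
that is all of `S₅`: `(1 5) · (1 2)(3 5 4)` is a 5-cycle, and a 5-cycle together with a
transposition generates `S₅`.
-/

open Equiv Set

section PowersetCard

variable {α β : Type*} [DecidableEq α] {n : ℕ}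

def powersetCardPermHom (e : β ≃ powersetCard α n) : Perm α →* Perm β :=
  e.symm.permCongrHom.toMonoidHom.comp (MulAction.toPermHom (Perm α) (powersetCard α n))

theorem powersetCardPermHom_injective (e : β ≃ powersetCard α n) (hn : 1 ≤ n)
    (hα : n < ENat.card α) : Function.Injective (powersetCardPermHom e) := by
  have : FaithfulSMul (Perm α) (powersetCard α n) := Set.powersetCard.faithfulSMul hn hα
  exact e.symm.permCongrHom.injective.comp MulAction.toPerm_injective

theorem powersetCardPermHom_eq_iff (e : β ≃ powersetCard α n) (π : Perm α) (τ : Perm β) :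
    powersetCardPermHom e π = τ ↔ ∀ b, π • e b = e (τ b) := by
  refine Equiv.ext_iff.trans (forall_congr' fun b => ?_)
  exact e.symm_apply_eq

end PowersetCard

/-- Symbol `i + 1` of `{1,…,10}` (index `i : Fin 10`) is the 2-subset `pairOf i` of `{1,…,5}`,
written with indices `0,…,4`. -/
def pairOf : Fin 10 → powersetCard (Fin 5) 2 := fun i =>
  ⟨![{0, 1}, {0, 2}, {2, 3}, {3, 4}, {1, 4}, {1, 2}, {0, 3}, {2, 4}, {1, 3}, {0, 4}] i,
    by fin_cases i <;> rfl⟩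

theorem pairOf_bijective : Function.Bijective pairOf := by
  rw [Fintype.bijective_iff_injective_and_card]
  refine ⟨by decide, ?_⟩
  rw [← Nat.card_eq_fintype_card, ← Nat.card_eq_fintype_card, Set.powersetCard.card,
    Nat.card_fin, Nat.card_fin]
  rfl

noncomputable def pairEquiv : Fin 10 ≃ powersetCard (Fin 5) 2 := .ofBijective _ pairOf_bijective

def sigma5 : Perm (Fin 5) := List.formPerm [0, 1] * List.formPerm [2, 4, 3]
def alpha5 : Perm (Fin 5) := swap 0 4

theorem closure_sigma5_alpha5 : Subgroup.closure {sigma5, alpha5} = ⊤ := by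
  have hcycle : alpha5 * sigma5 = List.formPerm [0, 1, 4, 3, 2] := by decide
  have hgen : Subgroup.closure {alpha5 * sigma5, alpha5} = ⊤ :=
    Perm.closure_prime_cycle_swap (by norm_num)
      (hcycle ▸ List.isCycle_formPerm (by decide) (by decide)) (by decide) ⟨0, 4, by decide, rfl⟩
  have hσ : sigma5 ∈ Subgroup.closure {sigma5, alpha5} := Subgroup.subset_closure (by simp)
  have hα : alpha5 ∈ Subgroup.closure {sigma5, alpha5} := Subgroup.subset_closure (by simp)
  refine eq_top_mono ((Subgroup.closure_le _).2 ?_) hgen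
  simp [Set.insert_subset_iff, mul_mem hα hσ, hα]

noncomputable def pairHom : Perm (Fin 5) →* Perm (Fin 10) := powersetCardPermHom pairEquiv

theorem pairHom_sigma5 : pairHom sigma5 = permSigma :=
  (powersetCardPermHom_eq_iff _ _ _).2 (by decide)

theorem pairHom_alpha5 : pairHom alpha5 = permAlpha :=
  (powersetCardPermHom_eq_iff _ _ _).2 (by decide)

theorem range_pairHom : pairHom.range = Subgroup.closure {permSigma, permAlpha} := by
  rw [MonoidHom.range_eq_map, ← closure_sigma5_alpha5, MonoidHom.map_closure, Set.image_pair,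
    pairHom_sigma5, pairHom_alpha5]

noncomputable def closureSigmaAlphaEquiv :
    Subgroup.closure {permSigma, permAlpha} ≃* Perm (Fin 5) :=
  (MulEquiv.subgroupCongr range_pairHom.symm).trans
    (MonoidHom.ofInjective (powersetCardPermHom_injective pairEquiv one_le_two (by norm_num))).symm

/-- `σ · α · φ = 1`, where the product is composition applied left to right
(`σ` first, then `α`, then `φ`, as customary for monodromy permutations), and the
subgroup of `S₁₀` generated by `σ` and `α` is isomorphic to `S₅`
(in particular it has order `120`). -/
theorem stmt9 :
    (permSigma.trans permAlpha).trans permPhi = Equiv.refl (Fin 10) ∧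
    Nonempty ((Subgroup.closure {permSigma, permAlpha} : Subgroup (Equiv.Perm (Fin 10)))
      ≃* Equiv.Perm (Fin 5)) ∧
    Nat.card (Subgroup.closure {permSigma, permAlpha} : Subgroup (Equiv.Perm (Fin 10))) = 120 := by
  refine ⟨by decide, ⟨closureSigmaAlphaEquiv⟩, ?_⟩
  rw [Nat.card_congr closureSigmaAlphaEquiv.toEquiv, Nat.card_perm, Nat.card_fin]
  rfl
end

section
/- Work in ℝ (or ℂ) with √5 the positive square root of 5. Let K = (11+5√5)/216, a = (-3+√5)/2, b = (7-3√5)/2. For every z with z ≠ 0 and (2+√5)z - (2-√5) ≠ 0, setting x = (z-1)/((2+√5)z - (2-√5)), one has x^2 + 4x - 1 ≠ 0 and K (z-1)^6 (z-a)^3 (z-b) / z^5 = (50000/27) · x^6 (x-1)^3 (x+1) / (x^2+4x-1)^5. That is, the Laurent polynomial L(z) = K(z-1)^6(z-a)^3(z-b)/z^5 is obtained from the rational function F_1(x) = (50000/27) · x^6(x-1)^3(x+1)/(x^2+4x-1)^5 by the Möbius substitution x = (z-1)/((2+√5)z - (2-√5)), which sends the pole -2-√5 of F_1 to 0 and the pole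 -2+√5 to ∞. -/
/-!
Write `d = (2+√5)z - (2-√5)`, so `x = (z-1)/d`. Using `√5² = 5` one finds
`x² + 4x - 1 = -20z/d²`, `x - 1 = -(1+√5)(z-a)/d` and `x + 1 = (3+√5)(z-b)/d`.
The powers of `d` cancel in `F₁(x)` because its numerator and denominator both have
degree 10, leaving `(1+√5)³(3+√5)(z-1)⁶(z-a)³(z-b)/(1728 z⁵)`, and
`(1+√5)³(3+√5)/1728 = (11+5√5)/216 = K`.
-/

section Mobius

variable {F : Type*} [Field F] {s z : F}

def mobius (s z : F) : F := (z - 1) / ((2 + s) * z - (2 - s))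

theorem mobius_sq_add_four_mul_sub_one (hs : s ^ 2 = 5) (hd : (2 + s) * z - (2 - s) ≠ 0) :
    mobius s z ^ 2 + 4 * mobius s z - 1 = -20 * z / ((2 + s) * z - (2 - s)) ^ 2 := by
  unfold mobius
  generalize hd' : (2 + s) * z - (2 - s) = d at *
  field_simp
  subst hd'
  linear_combination -(z + 1) ^ 2 * hs

variable [CharZero F]

theorem mobius_sq_add_four_mul_sub_one_ne_zero (hs : s ^ 2 = 5)
    (hz : z ≠ 0) (hd : (2 + s) * z - (2 - s) ≠ 0) :
    mobius s z ^ 2 + 4 * mobius s z - 1 ≠ 0 := by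
  rw [mobius_sq_add_four_mul_sub_one hs hd]
  exact div_ne_zero (mul_ne_zero (by norm_num) hz) (pow_ne_zero 2 hd)

theorem mobius_sub_one (hs : s ^ 2 = 5) (hd : (2 + s) * z - (2 - s) ≠ 0) :
    mobius s z - 1 = -((1 + s) * (z - (-3 + s) / 2)) / ((2 + s) * z - (2 - s)) := by
  rw [mobius, div_sub_one hd]
  congr 1
  linear_combination -hs / 2

theorem mobius_add_one (hs : s ^ 2 = 5) (hd : (2 + s) * z - (2 - s) ≠ 0) :
    mobius s z + 1 = (3 + s) * (z - (7 - 3 * s) / 2) / ((2 + s) * z - (2 - s)) := by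
  rw [mobius, div_add_one hd]
  congr 1
  linear_combination -3 * hs / 2

theorem mobius_pullback (hs : s ^ 2 = 5) (hz : z ≠ 0) (hd : (2 + s) * z - (2 - s) ≠ 0) :
    (50000 / 27) * mobius s z ^ 6 * (mobius s z - 1) ^ 3 * (mobius s z + 1) /
        (mobius s z ^ 2 + 4 * mobius s z - 1) ^ 5 =
      (1 + s) ^ 3 * (3 + s) / 1728 * (z - 1) ^ 6 * (z - (-3 + s) / 2) ^ 3 *
        (z - (7 - 3 * s) / 2) / z ^ 5 := by
  rw [mobius_sq_add_four_mul_sub_one hs hd, mobius_sub_one hs hd, mobius_add_one hs hd, mobius]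
  generalize (2 + s) * z - (2 - s) = d at *
  field_simp
  ring

end Mobius

/-- The Laurent polynomial `L(z) = K (z-1)^6 (z-a)^3 (z-b) / z^5`, with
`K = (11+5√5)/216`, `a = (-3+√5)/2`, `b = (7-3√5)/2`, is obtained from the rational
function `F₁(x) = (50000/27) x^6 (x-1)^3 (x+1) / (x^2+4x-1)^5` by the Möbius
substitution `x = (z-1)/((2+√5)z - (2-√5))`: for every `z ≠ 0` with
`(2+√5)z - (2-√5) ≠ 0`, the point `x` satisfies `x^2 + 4x - 1 ≠ 0` and
`K (z-1)^6 (z-a)^3 (z-b) / z^5 = (50000/27) x^6 (x-1)^3 (x+1) / (x^2+4x-1)^5`. -/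
theorem stmt16 (K a b : ℝ)
    (hK : K = (11 + 5 * Real.sqrt 5) / 216)
    (ha : a = (-3 + Real.sqrt 5) / 2)
    (hb : b = (7 - 3 * Real.sqrt 5) / 2)
    (z : ℝ) (hz : z ≠ 0)
    (hz2 : (2 + Real.sqrt 5) * z - (2 - Real.sqrt 5) ≠ 0)
    (x : ℝ) (hx : x = (z - 1) / ((2 + Real.sqrt 5) * z - (2 - Real.sqrt 5))) :
    x ^ 2 + 4 * x - 1 ≠ 0 ∧
    K * (z - 1) ^ 6 * (z - a) ^ 3 * (z - b) / z ^ 5 =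
      (50000 / 27) * x ^ 6 * (x - 1) ^ 3 * (x + 1) / (x ^ 2 + 4 * x - 1) ^ 5 := by
  have hs : Real.sqrt 5 ^ 2 = 5 := Real.sq_sqrt (by norm_num)
  have hK' : K = (1 + Real.sqrt 5) ^ 3 * (3 + Real.sqrt 5) / 1728 := by
    rw [hK]
    linear_combination -(Real.sqrt 5 ^ 2 + 6 * Real.sqrt 5 + 17) / 1728 * hs
  change x = mobius (Real.sqrt 5) z at hx
  subst hx ha hb hK'
  exact ⟨mobius_sq_add_four_mul_sub_one_ne_zero hs hz hz2, (mobius_pullback hs hz hz2).symm⟩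
end
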